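/- Fix m>0, 0<q<p, N≥2, λ_i = (p/q)^i, w(n) = Γ(n+m/2)/(n! Γ(m/2)), and for K∈ℕ let μ^K be the probability measure on A_K = {η∈ℕ^N : ∑_{i=1}^N η_i = K} with μ^K(η) proportional to ∏_{i=1}^N w(η_i) λ_i^{η_i}. Then for every δ∈(0,1) there exist constants C>0 and r∈(0,1) such that μ^K(η_N ≤ (1−δ)K) ≤ C r^{δK} for all K; in particular μ^K(η_N ≤ (1−δ)K) → 0 as K→∞. -/

import Mathlib

open Filter Topology

/-- The weights `w(n) = Γ(n+m/2)/(n! Γ(m/2))`. -/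
noncomputable def asipW (m : ℝ) (n : ℕ) : ℝ :=
  Real.Gamma (n + m / 2) / (n.factorial * Real.Gamma (m / 2))

/-- `λ_i = (p/q)^i` for site `i ∈ {1,…,N}` (here `i : Fin N` represents site `i+1`). -/
noncomputable def asipLam (p q : ℝ) {N : ℕ} (i : Fin N) : ℝ := (p / q) ^ ((i : ℕ) + 1)

/-- The canonical weight `∏_{i=1}^N w(η_i) λ_i^{η_i}` of a configuration `η`. -/
noncomputable def asipWeight (m p q : ℝ) {N : ℕ} (η : Fin N → ℕ) : ℝ :=
  ∏ i, asipW m (η i) * asipLam p q i ^ (η i)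

/-- The canonical partition function `Z(K) = ∑_{η ∈ A_K} ∏_i w(η_i) λ_i^{η_i}`. -/
noncomputable def asipZ (m p q : ℝ) (N K : ℕ) : ℝ :=
  ∑' η : {η : Fin N → ℕ // ∑ i, η i = K}, asipWeight m p q η.1

/-!
Write `β = p/q > 1`. The weight `w` grows and decays at most polynomially,
`(n+1)⁻ᵏ ≤ w n ≤ (n+1)ᵏ`, so `∏ᵢ w(ηᵢ) ≤ (K+1)^{k(N+1)} w(K)` on `A_K`. Every particle off the
last site earns at most `β^{N-1}` instead of `β^N`, so a configuration with `η_N ≤ (1-δ)K` has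
`λ`-weight at most `β^{NK} β^{-δK}`. The fully condensed configuration alone gives
`Z(K) ≥ w(K) β^{NK}`, and `|A_K| ≤ (K+1)^N`; hence the probability is at most
`(K+1)^D (q/p)^{δK}`, and the polynomial factor is absorbed by halving the rate: `r = √(q/p)`.
-/

lemma asipW_pos {m : ℝ} (hm : 0 < m) (n : ℕ) : 0 < asipW m n :=
  div_pos (Real.Gamma_pos_of_pos (by positivity))
    (mul_pos (mod_cast n.factorial_pos) (Real.Gamma_pos_of_pos (by positivity)))

lemma asipW_zero {m : ℝ} (hm : 0 < m) : asipW m 0 = 1 := by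
  rw [asipW, Nat.cast_zero, zero_add, Nat.factorial_zero, Nat.cast_one, one_mul,
    div_self (Real.Gamma_pos_of_pos (by positivity)).ne']

lemma asipW_succ {m : ℝ} (hm : 0 < m) (n : ℕ) :
    asipW m (n + 1) = asipW m n * ((n + m / 2) / (n + 1)) := by
  have hΓ : 0 < Real.Gamma (m / 2) := Real.Gamma_pos_of_pos (by positivity)
  rw [asipW, asipW, Nat.cast_succ, add_right_comm, Real.Gamma_add_one (by positivity),
    Nat.factorial_succ, Nat.cast_mul, Nat.cast_succ]
  field_simp

-- Bernoulli's inequality `1 + k/x ≤ (1 + 1/x)^k`, cleared of denominators.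
lemma pow_mul_add_natCast_le {x : ℝ} (hx : 0 ≤ x) (k : ℕ) : x ^ k * (x + k) ≤ x * (x + 1) ^ k := by
  induction k with
  | zero => simp
  | succ k ih =>
    push_cast
    have hxk : 0 ≤ x ^ k := pow_nonneg hx k
    calc x ^ (k + 1) * (x + (k + 1)) ≤ (x + 1) * (x ^ k * (x + k)) := by
          rw [pow_succ]; nlinarith [mul_nonneg hxk (Nat.cast_nonneg (α := ℝ) k)]
      _ ≤ (x + 1) * (x * (x + 1) ^ k) := by gcongr
      _ = x * (x + 1) ^ (k + 1) := by ring

lemma asipW_le_pow {m : ℝ} (hm : 0 < m) {k : ℕ} (hk : m / 2 ≤ k + 1) (n : ℕ) :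
    asipW m n ≤ ((n : ℝ) + 1) ^ k := by
  induction n with
  | zero => simp [asipW_zero hm]
  | succ n ih =>
    have hn : (0 : ℝ) < n + 1 := by positivity
    have hB := pow_mul_add_natCast_le hn.le k
    rw [asipW_succ hm, Nat.cast_succ, mul_div_assoc', div_le_iff₀ hn]
    calc asipW m n * (n + m / 2) ≤ ((n : ℝ) + 1) ^ k * (n + 1 + k) :=
          mul_le_mul ih (by linarith) (by positivity) (by positivity)
      _ ≤ _ := by linarith

lemma one_le_pow_mul_asipW {m : ℝ} (hm : 0 < m) {k : ℕ} (hk : 1 ≤ k * (m / 2)) (n : ℕ) :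
    1 ≤ ((n : ℝ) + 1) ^ k * asipW m n := by
  induction n with
  | zero => simp [asipW_zero hm]
  | succ n ih =>
    have hn : (0 : ℝ) < n + 1 := by positivity
    have hB := pow_mul_add_natCast_le hn.le k
    have hk1 : (1 : ℝ) ≤ k := by
      rcases k with _ | k
      · norm_num at hk
      · exact mod_cast Nat.succ_pos k
    have hquad : ((n : ℝ) + 1) ^ 2 ≤ (n + 1 + k) * (n + m / 2) := by
      nlinarith [Nat.cast_nonneg (α := ℝ) n]
    have hpow : 0 ≤ ((n : ℝ) + 1) ^ k := by positivity
    have key : ((n : ℝ) + 1) ^ k * (n + 1) ≤ ((n : ℝ) + 1 + 1) ^ k * (n + m / 2) := by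
      refine le_of_mul_le_mul_left ?_ hn
      nlinarith [mul_le_mul_of_nonneg_right hB (by positivity : (0 : ℝ) ≤ n + m / 2)]
    rw [asipW_succ hm, Nat.cast_succ]
    calc (1 : ℝ) ≤ ((n : ℝ) + 1) ^ k * asipW m n := ih
      _ = ((n : ℝ) + 1) ^ k * (n + 1) * asipW m n / (n + 1) := by field_simp
      _ ≤ ((n : ℝ) + 1 + 1) ^ k * (n + m / 2) * asipW m n / (n + 1) := by
          gcongr; exact (asipW_pos hm n).le
      _ = _ := by ring

lemma prod_asipW_le {m : ℝ} (hm : 0 < m) {k : ℕ} (hk_le : m / 2 ≤ k + 1) (hk_ge : 1 ≤ k * (m / 2))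
    {ι : Type*} (s : Finset ι) (η : ι → ℕ) :
    ∏ i ∈ s, asipW m (η i) ≤
      (((∑ i ∈ s, η i : ℕ) : ℝ) + 1) ^ (k * (s.card + 1)) * asipW m (∑ i ∈ s, η i) := by
  set S := ∑ i ∈ s, η i
  calc ∏ i ∈ s, asipW m (η i) ≤ ∏ _i ∈ s, ((S : ℝ) + 1) ^ k := by
        refine Finset.prod_le_prod (fun i _ => (asipW_pos hm _).le) fun i hi => ?_
        refine (asipW_le_pow hm hk_le _).trans (pow_le_pow_left₀ (by positivity) ?_ k)
        gcongr
        exact Finset.single_le_sum (fun j _ => Nat.zero_le (η j)) hi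
    _ = ((S : ℝ) + 1) ^ (k * s.card) := by rw [Finset.prod_const, ← pow_mul]
    _ ≤ ((S : ℝ) + 1) ^ (k * s.card) * (((S : ℝ) + 1) ^ k * asipW m S) :=
        le_mul_of_one_le_right (by positivity) (one_le_pow_mul_asipW hm hk_ge S)
    _ = _ := by ring

lemma sum_succ_mul_add_sum_le {N : ℕ} (η : Fin N → ℕ) (l : Fin N) (hl : (l : ℕ) + 1 = N) :
    ∑ i : Fin N, ((i : ℕ) + 1) * η i + ∑ i, η i ≤ N * ∑ i, η i + η l := by
  calc ∑ i : Fin N, ((i : ℕ) + 1) * η i + ∑ i, η i = ∑ i : Fin N, ((i : ℕ) + 2) * η i := by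
        rw [← Finset.sum_add_distrib]; congr 1; ext i; ring
    _ ≤ ∑ i, (N * η i + if i = l then η i else 0) := by
        refine Finset.sum_le_sum fun i _ => ?_
        split_ifs with h
        · subst h; nlinarith
        · have : (i : ℕ) + 2 ≤ N := by have := i.isLt; have := Fin.val_ne_of_ne h; omega
          nlinarith
    _ = N * ∑ i, η i + η l := by simp [Finset.sum_add_distrib, Finset.mul_sum]

lemma prod_asipLam_pow (p q : ℝ) {N : ℕ} (η : Fin N → ℕ) :
    ∏ i, asipLam p q i ^ η i = (p / q) ^ ∑ i : Fin N, ((i : ℕ) + 1) * η i := by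
  simp_rw [asipLam, ← pow_mul]
  exact Finset.prod_pow_eq_pow_sum _ _ _

lemma asipWeight_nonneg {m p q : ℝ} (hm : 0 < m) (hq : 0 < q) (hp : 0 < p) {N : ℕ}
    (η : Fin N → ℕ) : 0 ≤ asipWeight m p q η :=
  Finset.prod_nonneg fun i _ => mul_nonneg (asipW_pos hm _).le (by unfold asipLam; positivity)

lemma asipWeight_mul_pow_le {m p q : ℝ} (hm : 0 < m) (hq : 0 < q) (hpq : q ≤ p) {k : ℕ}
    (hk_le : m / 2 ≤ k + 1) (hk_ge : 1 ≤ k * (m / 2)) {N : ℕ} (η : Fin N → ℕ) (l : Fin N)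
    (hl : (l : ℕ) + 1 = N) :
    asipWeight m p q η * (p / q) ^ ∑ i, η i ≤
      (((∑ i, η i : ℕ) : ℝ) + 1) ^ (k * (N + 1)) *
        (asipW m (∑ i, η i) * (p / q) ^ (N * ∑ i, η i)) * (p / q) ^ η l := by
  have hβ : 1 ≤ p / q := (one_le_div hq).2 hpq
  have hW := prod_asipW_le hm hk_le hk_ge Finset.univ η
  rw [Finset.card_univ, Fintype.card_fin] at hW
  have hw := asipW_pos hm (∑ i, η i)
  calc asipWeight m p q η * (p / q) ^ ∑ i, η i
      = (∏ i, asipW m (η i)) * (p / q) ^ (∑ i : Fin N, ((i : ℕ) + 1) * η i + ∑ i, η i) := by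
        rw [asipWeight, Finset.prod_mul_distrib, prod_asipLam_pow, pow_add, mul_assoc]
    _ ≤ ((((∑ i, η i : ℕ) : ℝ) + 1) ^ (k * (N + 1)) * asipW m (∑ i, η i)) *
          (p / q) ^ (N * ∑ i, η i + η l) :=
        mul_le_mul hW (pow_le_pow_right₀ hβ (sum_succ_mul_add_sum_le η l hl)) (by positivity)
          (by positivity)
    _ = _ := by rw [pow_add]; ring

lemma asipWeight_single {m : ℝ} (hm : 0 < m) (p q : ℝ) {N : ℕ} (l : Fin N) (hl : (l : ℕ) + 1 = N)
    (K : ℕ) : asipWeight m p q (Pi.single l K) = asipW m K * (p / q) ^ (N * K) := by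
  rw [asipWeight, Finset.prod_eq_single l
    (fun i _ hi => by simp [Pi.single_eq_of_ne hi, asipW_zero hm]) (by simp)]
  simp [asipLam, hl, pow_mul]

lemma tsum_subtype_eq_sum {α β : Type*} [AddCommMonoid α] [TopologicalSpace α] (f : β → α)
    {P : β → Prop} (s : Finset β) (hs : ∀ x, x ∈ s ↔ P x) :
    ∑' x : {x // P x}, f x = ∑ x ∈ s, f x := by
  rw [← Finset.tsum_subtype s f]
  exact ((Equiv.subtypeEquivRight hs).tsum_eq fun x => f x.1).symm

lemma asipZ_eq_sum (m p q : ℝ) (N K : ℕ) :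
    asipZ m p q N K = ∑ η ∈ Finset.Nat.antidiagonalTuple N K, asipWeight m p q η :=
  tsum_subtype_eq_sum _ _ fun _ => Finset.Nat.mem_antidiagonalTuple

lemma asipW_mul_pow_le_asipZ {m p q : ℝ} (hm : 0 < m) (hq : 0 < q) (hp : 0 < p) {N : ℕ}
    (l : Fin N) (hl : (l : ℕ) + 1 = N) (K : ℕ) :
    asipW m K * (p / q) ^ (N * K) ≤ asipZ m p q N K := by
  rw [asipZ_eq_sum, ← asipWeight_single hm p q l hl]
  exact Finset.single_le_sum (fun η _ => asipWeight_nonneg hm hq hp η)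
    (Finset.Nat.mem_antidiagonalTuple.2 (by simp))

lemma card_antidiagonalTuple_le (N K : ℕ) :
    (Finset.Nat.antidiagonalTuple N K).card ≤ (K + 1) ^ N := by
  calc (Finset.Nat.antidiagonalTuple N K).card
      ≤ (Fintype.piFinset fun _ : Fin N => Finset.range (K + 1)).card := by
        refine Finset.card_le_card fun η hη => Fintype.mem_piFinset.2 fun i => ?_
        rw [Finset.mem_range, Nat.lt_succ_iff, ← Finset.Nat.mem_antidiagonalTuple.1 hη]
        exact Finset.single_le_sum (fun j _ => Nat.zero_le (η j)) (Finset.mem_univ i)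
    _ = (K + 1) ^ N := by simp

lemma asipWeight_le_of_apply_le {m p q : ℝ} (hm : 0 < m) (hq : 0 < q) (hpq : q ≤ p) {k : ℕ}
    (hk_le : m / 2 ≤ k + 1) (hk_ge : 1 ≤ k * (m / 2)) {N : ℕ} (l : Fin N) (hl : (l : ℕ) + 1 = N)
    {δ : ℝ} {K : ℕ} {η : Fin N → ℕ} (hsum : ∑ i, η i = K)
    (hl_le : ((η l : ℕ) : ℝ) ≤ (1 - δ) * K) :
    asipWeight m p q η ≤
      ((K : ℝ) + 1) ^ (k * (N + 1)) * (asipW m K * (p / q) ^ (N * K)) * (q / p) ^ (δ * K) := by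
  have hβ : 1 ≤ p / q := (one_le_div hq).2 hpq
  have hβ0 : 0 < p / q := by positivity
  have hweight := asipWeight_mul_pow_le hm hq hpq hk_le hk_ge η l hl
  rw [hsum] at hweight
  have hηl : (p / q) ^ η l ≤ (p / q) ^ K * (q / p) ^ (δ * K) :=
    calc (p / q) ^ η l = (p / q) ^ ((η l : ℕ) : ℝ) := (Real.rpow_natCast _ _).symm
      _ ≤ (p / q) ^ ((1 - δ) * K) := Real.rpow_le_rpow_of_exponent_le hβ hl_le
      _ = (p / q) ^ K * (q / p) ^ (δ * K) := by
        rw [sub_mul, one_mul, Real.rpow_sub hβ0, Real.rpow_natCast, div_eq_mul_inv,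
          ← Real.inv_rpow hβ0.le, inv_div]
  refine le_of_mul_le_mul_right (hweight.trans ?_) (pow_pos hβ0 K)
  have := asipW_pos hm K
  calc _ ≤ ((K : ℝ) + 1) ^ (k * (N + 1)) * (asipW m K * (p / q) ^ (N * K)) *
        ((p / q) ^ K * (q / p) ^ (δ * K)) := by gcongr
    _ = _ := by ring

theorem asip_tail_ratio_le {m p q : ℝ} (hm : 0 < m) (hq : 0 < q) (hpq : q ≤ p) {k : ℕ}
    (hk_le : m / 2 ≤ k + 1) (hk_ge : 1 ≤ k * (m / 2)) {N : ℕ} (l : Fin N) (hl : (l : ℕ) + 1 = N)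
    (δ : ℝ) (K : ℕ) :
    (∑' η : {η : Fin N → ℕ // (∑ i, η i = K) ∧ ((η l : ℕ) : ℝ) ≤ (1 - δ) * K},
        asipWeight m p q η.1) / asipZ m p q N K ≤
      ((K : ℝ) + 1) ^ (N + k * (N + 1)) * (q / p) ^ (δ * K) := by
  classical
  have hp : 0 < p := hq.trans_le hpq
  set G := asipW m K * (p / q) ^ (N * K)
  have hG : G ≤ asipZ m p q N K := asipW_mul_pow_le_asipZ hm hq hp l hl K
  have hGpos : 0 < G := by have := asipW_pos hm K; positivity
  set s := (Finset.Nat.antidiagonalTuple N K).filter fun η => ((η l : ℕ) : ℝ) ≤ (1 - δ) * K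
  have hs : (s.card : ℝ) ≤ ((K : ℝ) + 1) ^ N := mod_cast
    (Finset.card_filter_le _ _).trans (card_antidiagonalTuple_le N K)
  rw [tsum_subtype_eq_sum (asipWeight m p q) s (by simp [s, Finset.Nat.mem_antidiagonalTuple]),
    div_le_iff₀ (hGpos.trans_le hG)]
  calc ∑ η ∈ s, asipWeight m p q η
      ≤ s.card • (((K : ℝ) + 1) ^ (k * (N + 1)) * G * (q / p) ^ (δ * K)) := by
        refine Finset.sum_le_card_nsmul _ _ _ fun η hη => ?_
        obtain ⟨hsum, hl_le⟩ := Finset.mem_filter.1 hη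
        exact asipWeight_le_of_apply_le hm hq hpq hk_le hk_ge l hl
          (Finset.Nat.mem_antidiagonalTuple.1 hsum) hl_le
    _ ≤ ((K : ℝ) + 1) ^ N * (((K : ℝ) + 1) ^ (k * (N + 1)) * G * (q / p) ^ (δ * K)) := by
        rw [nsmul_eq_mul]; gcongr
    _ = ((K : ℝ) + 1) ^ (N + k * (N + 1)) * (q / p) ^ (δ * K) * G := by ring
    _ ≤ _ := by gcongr

lemma exists_pow_mul_rpow_le_mul_sqrt_rpow {ρ δ : ℝ} (hρ0 : 0 < ρ) (hρ1 : ρ < 1) (hδ : 0 < δ)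
    (D : ℕ) : ∃ C > 0, ∀ K : ℕ, ((K : ℝ) + 1) ^ D * ρ ^ (δ * K) ≤ C * √ρ ^ (δ * K) := by
  set x := √ρ ^ δ
  have hx0 : 0 < x := Real.rpow_pos_of_pos (Real.sqrt_pos.2 hρ0) δ
  have hx1 : x < 1 :=
    Real.rpow_lt_one (Real.sqrt_nonneg ρ) ((Real.sqrt_lt' one_pos).2 (by rwa [one_pow])) hδ
  have hsqrt : ∀ K : ℕ, √ρ ^ (δ * K) = x ^ K := fun K => by
    rw [Real.rpow_mul (Real.sqrt_nonneg ρ), Real.rpow_natCast]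
  have hρ : ∀ K : ℕ, ρ ^ (δ * K) = x ^ K * x ^ K := fun K => by
    rw [← hsqrt, ← Real.mul_rpow (Real.sqrt_nonneg ρ) (Real.sqrt_nonneg ρ),
      Real.mul_self_sqrt hρ0.le]
  have hlim : Tendsto (fun K : ℕ => ((K : ℝ) + 1) ^ D * x ^ K) atTop (𝓝 0) := by
    have h := ((tendsto_pow_const_mul_const_pow_of_abs_lt_one D
      (by rwa [abs_of_pos hx0])).comp (tendsto_add_atTop_nat 1)).div_const x
    rw [zero_div] at h
    refine h.congr fun K => ?_
    simp only [Function.comp_apply, Nat.cast_succ, pow_succ]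
    field_simp
  obtain ⟨C, hC⟩ := hlim.bddAbove_range
  refine ⟨max C 1, by positivity, fun K => ?_⟩
  rw [hρ, hsqrt, ← mul_assoc]
  exact mul_le_mul_of_nonneg_right ((hC (Set.mem_range_self K)).trans (le_max_left _ _))
    (pow_nonneg hx0.le K)

lemma tendsto_const_mul_rpow_mul_natCast {r δ : ℝ} (hr0 : 0 ≤ r) (hr1 : r < 1) (hδ : 0 < δ)
    (C : ℝ) : Tendsto (fun K : ℕ => C * r ^ (δ * K)) atTop (𝓝 0) := by
  have h := (tendsto_pow_atTop_nhds_zero_of_lt_one (Real.rpow_nonneg hr0 δ)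
    (Real.rpow_lt_one hr0 hr1 hδ)).const_mul C
  rw [mul_zero] at h
  refine h.congr fun K => ?_
  rw [Real.rpow_mul hr0, Real.rpow_natCast]

/-- **Condensation in the ASIP, part b)**: under the canonical measure
`μ^K(η) ∝ ∏_i w(η_i) λ_i^{η_i}`, for every `δ ∈ (0,1)` there are `C > 0` and `r ∈ (0,1)`
with `μ^K(η_N ≤ (1−δ)K) ≤ C r^{δK}` for all `K`; in particular
`μ^K(η_N ≤ (1−δ)K) → 0` as `K → ∞`. -/
theorem asip_condensation_tail_bound
    (m p q : ℝ) (hm : 0 < m) (hq : 0 < q) (hpq : q < p)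
    (N : ℕ) (hN : 2 ≤ N) (δ : ℝ) (hδ : δ ∈ Set.Ioo (0 : ℝ) 1) :
    ∃ C > (0 : ℝ), ∃ r ∈ Set.Ioo (0 : ℝ) 1,
      (∀ K : ℕ,
        (∑' η : {η : Fin N → ℕ //
            (∑ i, η i = K) ∧ ((η ⟨N - 1, by omega⟩ : ℕ) : ℝ) ≤ (1 - δ) * K},
          asipWeight m p q η.1) / asipZ m p q N K ≤ C * r ^ (δ * K)) ∧
      Tendsto
        (fun K : ℕ =>
          (∑' η : {η : Fin N → ℕ //
              (∑ i, η i = K) ∧ ((η ⟨N - 1, by omega⟩ : ℕ) : ℝ) ≤ (1 - δ) * K},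
            asipWeight m p q η.1) / asipZ m p q N K)
        atTop (𝓝 0) := by
  have hp : 0 < p := hq.trans hpq
  obtain ⟨k, hk_le, hk_ge⟩ : ∃ k : ℕ, m / 2 ≤ k + 1 ∧ 1 ≤ k * (m / 2) := by
    refine ⟨⌈m / 2 + 2 / m⌉₊, ?_, ?_⟩ <;> have hk := Nat.le_ceil (m / 2 + 2 / m)
    · linarith [show 0 < 2 / m by positivity]
    · have h2m : 2 / m * (m / 2) = 1 := by field_simp
      nlinarith
  have hratio := asip_tail_ratio_le hm hq hpq.le hk_le hk_ge (⟨N - 1, by omega⟩ : Fin N)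
    (by dsimp only; omega) δ
  have hρ1 : q / p < 1 := (div_lt_one hp).2 hpq
  obtain ⟨C, hC, hbound⟩ :=
    exists_pow_mul_rpow_le_mul_sqrt_rpow (div_pos hq hp) hρ1 hδ.1 (N + k * (N + 1))
  have hsqrt : √(q / p) < 1 := (Real.sqrt_lt' one_pos).2 (by rwa [one_pow])
  have htail := fun K => (hratio K).trans (hbound K)
  refine ⟨C, hC, √(q / p), ⟨Real.sqrt_pos.2 (div_pos hq hp), hsqrt⟩, htail, ?_⟩
  refine squeeze_zero (fun K => div_nonneg ?_ ?_) htail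
    (tendsto_const_mul_rpow_mul_natCast (Real.sqrt_nonneg _) hsqrt hδ.1 C)
  · exact tsum_nonneg fun η => asipWeight_nonneg hm hq hp η.1
  · exact tsum_nonneg fun η => asipWeight_nonneg hm hq hp η.1
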